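/- arXiv:2203.10495 — 3 statements merged into one kernel-verified Lean document; each statement's English description precedes it below -/
import Mathlib

section
/- Let n ≥ 2 and let μ₁, …, μₙ be distinct nonzero real numbers. Define θ_k = ∏_{j ≠ k} μ_k/(μ_k - μ_j). Then ∑_{k=1}^n θ_k μ_k = ∑_{k=1}^n μ_k. -/
/-!
With `w_k = ∏_{j ≠ k} (μ_k - μ_j)⁻¹`, the sum is `∑ μ_k ^ n w_k`. The polynomial
`X ^ n - ∏ (X - μ_j)` has degree `< n` and takes the value `μ_k ^ n` at each node, so Lagrange
interpolation expresses its coefficient of `X ^ (n - 1)` as `∑ μ_k ^ n w_k`; read off directly,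
that coefficient is `∑ μ_k` by Vieta.
-/

open Finset Polynomial

namespace Lagrange

variable {ι : Type*} {s : Finset ι}

theorem coeff_X_pow_card_sub_nodal {R : Type*} [CommRing R] (v : ι → R) :
    (X ^ #s - nodal s v).coeff (#s - 1) = ∑ i ∈ s, v i := by
  rcases s.eq_empty_or_nonempty with rfl | hs
  · simp
  rw [coeff_sub, coeff_X_pow, if_neg (by have := hs.card_pos; omega), nodal_eq,
    prod_X_sub_C_coeff_card_pred s v hs.card_pos, zero_sub, neg_neg]

theorem degree_X_pow_card_sub_nodal_lt {R : Type*} [CommRing R] [Nontrivial R] (v : ι → R) :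
    (X ^ #s - nodal s v).degree < (#s : WithBot ℕ) := by
  have hX : (X ^ #s : R[X]).degree = #s := degree_X_pow _
  rw [← hX]
  exact degree_sub_lt_left (by rw [hX, degree_nodal]) (monic_X_pow _).ne_zero
    (by rw [(monic_X_pow _).leadingCoeff, nodal_monic.leadingCoeff])

theorem sum_pow_card_div_prod_sub {F : Type*} [Field F] [DecidableEq ι] {v : ι → F}
    (hvs : Set.InjOn v s) :
    ∑ i ∈ s, v i ^ #s / ∏ j ∈ s.erase i, (v i - v j) = ∑ i ∈ s, v i := by
  rw [← coeff_X_pow_card_sub_nodal v, coeff_eq_sum hvs (degree_X_pow_card_sub_nodal_lt v)]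
  refine sum_congr rfl fun i hi => ?_
  rw [eval_sub, eval_pow, eval_X, eval_nodal_at_node hi, sub_zero]

end Lagrange

theorem stmt_3_general (n : ℕ) (μ : Fin n → ℝ) (hinj : Function.Injective μ) :
    ∑ k : Fin n, (∏ j ∈ Finset.univ.erase k, μ k / (μ k - μ j)) * μ k
      = ∑ k : Fin n, μ k := by
  have hterm (k : Fin n) : (∏ j ∈ univ.erase k, μ k / (μ k - μ j)) * μ k
      = μ k ^ #(univ : Finset (Fin n)) / ∏ j ∈ univ.erase k, (μ k - μ j) := by
    rw [prod_div_distrib, prod_const, card_erase_of_mem (mem_univ k), div_mul_eq_mul_div,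
      ← pow_succ, Nat.sub_add_cancel (card_pos.mpr ⟨k, mem_univ k⟩)]
  simp_rw [hterm]
  exact Lagrange.sum_pow_card_div_prod_sub hinj.injOn

theorem stmt_3 (n : ℕ) (hn : 2 ≤ n) (μ : Fin n → ℝ)
    (hμ0 : ∀ k, μ k ≠ 0) (hinj : Function.Injective μ) :
    ∑ k : Fin n, (∏ j ∈ Finset.univ.erase k, μ k / (μ k - μ j)) * μ k
      = ∑ k : Fin n, μ k :=
  stmt_3_general n μ hinj
end

section
/- Let μ₁, μ₂ be distinct nonzero real numbers and m ≥ 2 an integer. If ∑_{j=0}^m μ₁^j μ₂^{m-j} = μ₁^m + μ₂^m, then m is odd and μ₂ = -μ₁. -/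
/-! Multiplying `h_m(a, b) = a ^ m + b ^ m` by `a - b` and comparing with the telescoped
`h_m(a, b) (a - b) = a ^ (m + 1) - b ^ (m + 1)` leaves `a b (a ^ (m - 1) - b ^ (m - 1)) = 0`.
For distinct nonzero reals, `a ^ (m - 1) = b ^ (m - 1)` forces `m - 1` even and `b = -a`. -/

open Finset

theorem pow_eq_pow_of_geom_sum₂_eq_add {R : Type*} [CommRing R] [IsDomain R] {a b : R}
    (ha : a ≠ 0) (hb : b ≠ 0) (k : ℕ)
    (h : ∑ j ∈ range (k + 2), a ^ j * b ^ (k + 1 - j) = a ^ (k + 1) + b ^ (k + 1)) :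
    a ^ k = b ^ k := by
  have htelescope : (∑ j ∈ range (k + 2), a ^ j * b ^ (k + 1 - j)) * (a - b) =
      a ^ (k + 2) - b ^ (k + 2) := geom_sum₂_mul a b (k + 2)
  rw [h] at htelescope
  have hprod : a * b * (a ^ k - b ^ k) = 0 := by linear_combination -htelescope
  simpa [ha, hb, sub_eq_zero] using hprod

theorem stmt_9 (μ₁ μ₂ : ℝ) (h₁ : μ₁ ≠ 0) (h₂ : μ₂ ≠ 0) (hne : μ₁ ≠ μ₂)
    (m : ℕ) (hm : 2 ≤ m)
    (h : ∑ j ∈ Finset.range (m + 1), μ₁ ^ j * μ₂ ^ (m - j) = μ₁ ^ m + μ₂ ^ m) :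
    Odd m ∧ μ₂ = -μ₁ := by
  obtain ⟨k, rfl⟩ : ∃ k, m = k + 1 := ⟨m - 1, by omega⟩
  have hpow : μ₁ ^ k = μ₂ ^ k := pow_eq_pow_of_geom_sum₂_eq_add h₁ h₂ k h
  rcases (pow_eq_pow_iff_of_ne_zero (by omega)).1 hpow with heq | ⟨hneg, heven⟩
  · exact absurd heq hne
  · exact ⟨heven.add_one, by rw [hneg, neg_neg]⟩
end

section
/- Let n ≥ 2 and let μ₁, …, μₙ be distinct nonzero real numbers with θ_k = ∏_{j ≠ k} μ_k/(μ_k - μ_j). Then ∑_{k=1}^n θ_k μ_k² - ∑_{k=1}^n μ_k² = ∑_{1 ≤ i < j ≤ n} μ_i μ_j, i.e., the m = 2 case of the identity ∑_k θ_k μ_k^m = h_m(μ): h₂(μ₁,…,μₙ) = ∑_k μ_k² + ∑_{i<j} μ_i μ_j. -/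
/-!
Write `W = ∏ⱼ (X - μⱼ) = Xⁿ - e₁Xⁿ⁻¹ + e₂Xⁿ⁻² - ⋯` and `D(P) = ∑ₖ P(μₖ) / ∏_{j ≠ k} (μₖ - μⱼ)`.
By Lagrange interpolation `D(P)` is the coefficient of `Xⁿ⁻¹` when `deg P < n`; since `D` only
sees the values at the nodes, `D(P) = coeff_{n-1} P + e₁ coeff_n P` when `deg P ≤ n`.
Now `θₖ μₖ² = μₖⁿ⁺¹ / ∏_{j ≠ k} (μₖ - μⱼ)`, and `Xⁿ⁺¹` agrees at the nodes with `X (Xⁿ - W)`,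
whose top coefficients are `e₁` and `-e₂`; hence `∑ₖ θₖ μₖ² = e₁² - e₂ = ∑ μₖ² + ∑_{i<j} μᵢμⱼ`.
-/

open Finset Polynomial

namespace Lagrange

variable {F ι : Type*} [Field F] {s : Finset ι} {v : ι → F}

theorem coeff_nodal_card : (nodal s v).coeff #s = 1 := by
  simpa [natDegree_nodal] using (nodal_monic (s := s) (v := v)).coeff_natDegree

theorem coeff_nodal_card_sub_one (hs : 0 < #s) :
    (nodal s v).coeff (#s - 1) = -∑ i ∈ s, v i := by
  rw [nodal_eq, prod_X_sub_C_coeff_card_pred s v hs]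

theorem coeff_nodal_card_sub_two (hs : 2 ≤ #s) :
    (nodal s v).coeff (#s - 2) = ∑ t ∈ s.powersetCard 2, ∏ i ∈ t, v i := by
  have h := prod_X_add_C_coeff s (fun i => -v i) (k := #s - 2) (by omega)
  simp only [map_neg, ← sub_eq_add_neg, Nat.sub_sub_self hs] at h
  rw [nodal_eq, h]
  refine sum_congr rfl fun t ht => ?_
  rw [prod_neg, (mem_powersetCard.mp ht).2]
  ring

variable [DecidableEq ι]

theorem sum_eval_div_prod_sub_of_degree_le (hvs : Set.InjOn v s) (hs : 0 < #s) {P : F[X]}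
    (hP : P.degree ≤ #s) :
    ∑ i ∈ s, P.eval (v i) / ∏ j ∈ s.erase i, (v i - v j)
      = P.coeff (#s - 1) + P.coeff #s * ∑ i ∈ s, v i := by
  set Q := P - C (P.coeff #s) * nodal s v
  have hQ : Q.degree < #s := by
    rw [degree_lt_iff_coeff_zero]
    intro m hm
    rcases hm.eq_or_lt with rfl | hm
    · simp [Q, coeff_nodal_card]
    · simp [Q, coeff_C_mul, coeff_eq_zero_of_degree_lt (hP.trans_lt (by exact_mod_cast hm)),
        coeff_eq_zero_of_natDegree_lt (natDegree_nodal (s := s) (v := v) ▸ hm)]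
  have hQP : ∀ i ∈ s, Q.eval (v i) = P.eval (v i) := fun i hi => by
    simp [Q, eval_nodal_at_node hi]
  calc ∑ i ∈ s, P.eval (v i) / ∏ j ∈ s.erase i, (v i - v j)
      = Q.coeff (#s - 1) := by
        rw [coeff_eq_sum hvs hQ]
        exact sum_congr rfl fun i hi => by rw [hQP i hi]
    _ = P.coeff (#s - 1) + P.coeff #s * ∑ i ∈ s, v i := by
        simp only [Q, coeff_sub, coeff_C_mul, coeff_nodal_card_sub_one hs]
        ring

theorem sum_pow_card_add_one_div_prod_sub (hvs : Set.InjOn v s) (hs : 2 ≤ #s) :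
    ∑ i ∈ s, v i ^ (#s + 1) / ∏ j ∈ s.erase i, (v i - v j)
      = (∑ i ∈ s, v i) ^ 2 - ∑ t ∈ s.powersetCard 2, ∏ i ∈ t, v i := by
  set V := X ^ #s - nodal s v
  have hV : V.degree < #s := by
    simpa using degree_sub_lt_left (p := X ^ #s) (q := nodal s v)
      (by rw [degree_X_pow, degree_nodal]) (pow_ne_zero _ X_ne_zero)
      (by rw [(monic_X_pow _).leadingCoeff, nodal_monic.leadingCoeff])
  have hXV : (X * V).degree ≤ (#s : WithBot ℕ) := by
    rw [degree_le_iff_coeff_zero]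
    intro m hm
    replace hm : #s < m := by exact_mod_cast hm
    obtain ⟨k, rfl⟩ : ∃ k, m = k + 1 := ⟨m - 1, by omega⟩
    rw [coeff_X_mul, coeff_eq_zero_of_degree_lt (hV.trans_le (by exact_mod_cast (by omega)))]
  have hcoeff : ∀ k < #s, (X * V).coeff (k + 1) = -(nodal s v).coeff k := fun k hk => by
    simp [V, coeff_X_mul, coeff_X_pow, hk.ne]
  have heval : ∀ i ∈ s, (X * V).eval (v i) = v i ^ (#s + 1) := fun i hi => by
    simp [V, eval_nodal_at_node hi, pow_succ']
  rw [← sum_congr rfl fun i hi => by rw [← heval i hi],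
    sum_eval_div_prod_sub_of_degree_le hvs (by omega) hXV]
  have h1 := coeff_nodal_card_sub_one (v := v) (by omega : 0 < #s)
  have h2 := coeff_nodal_card_sub_two (v := v) hs
  obtain ⟨k, hk⟩ : ∃ k, #s = k + 1 + 1 := ⟨#s - 2, by omega⟩
  simp only [hk, Nat.add_sub_cancel, show k + 1 + 1 - 2 = k by omega] at h1 h2 ⊢
  rw [hcoeff k (by omega), hcoeff (k + 1) (by omega), h1, h2]
  ring

end Lagrange

section PairSums

variable {α : Type*} [LinearOrder α] [Fintype α] [LocallyFiniteOrderTop α]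

theorem Finset.sum_powersetCard_two_univ {M : Type*} [AddCommMonoid M] (g : Finset α → M) :
    ∑ t ∈ (univ : Finset α).powersetCard 2, g t = ∑ i, ∑ j ∈ Ioi i, g {i, j} := by
  rw [sum_sigma']
  symm
  refine sum_bij (fun p _ => {p.1, p.2}) ?_ ?_ ?_ (fun _ _ => rfl)
  · rintro ⟨i, j⟩ hij
    simp only [mem_sigma, mem_Ioi] at hij
    simp [card_pair hij.2.ne]
  · rintro ⟨i, j⟩ hij ⟨i', j'⟩ hij' h
    simp only [mem_sigma, mem_Ioi] at hij hij'
    simp only [Finset.ext_iff, mem_insert, mem_singleton] at h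
    obtain ⟨rfl, rfl⟩ : i = i' ∧ j = j' := by grind [h i, h j, h i']
    rfl
  · intro t ht
    obtain ⟨x, y, hxy, rfl⟩ := card_eq_two.mp (mem_powersetCard.mp ht).2
    rcases hxy.lt_or_gt with h | h
    · exact ⟨⟨x, y⟩, by simpa using h, rfl⟩
    · exact ⟨⟨y, x⟩, by simpa using h, pair_comm y x⟩

theorem Finset.sq_sum_univ_eq_sum_sq_add_two_mul_sum_sum_Ioi [LocallyFiniteOrderBot α]
    {R : Type*} [CommSemiring R] (f : α → R) :
    (∑ i, f i) ^ 2 = ∑ i, f i ^ 2 + 2 * ∑ i, ∑ j ∈ Ioi i, f i * f j := by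
  have hoff := sum_sum_Ioi_add_eq_sum_sum_off_diag fun i j => f i * f j
  calc (∑ i, f i) ^ 2 = ∑ i, ∑ j, f j * f i := by rw [sq, sum_mul_sum, sum_comm]
    _ = ∑ i, (f i ^ 2 + ∑ j ∈ {i}ᶜ, f j * f i) := by
        refine sum_congr rfl fun i _ => ?_
        rw [Fintype.sum_eq_add_sum_compl i, sq]
    _ = ∑ i, f i ^ 2 + 2 * ∑ i, ∑ j ∈ Ioi i, f i * f j := by
        rw [sum_add_distrib, ← hoff, mul_sum]
        simp only [mul_sum, two_mul, mul_comm (f _) (f _)]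

end PairSums

theorem stmt_16_general (n : ℕ) (hn : 2 ≤ n) (μ : Fin n → ℝ)
    (hinj : Function.Injective μ) :
    ∑ k : Fin n, (∏ j ∈ Finset.univ.erase k, μ k / (μ k - μ j)) * μ k ^ 2
        - ∑ k : Fin n, μ k ^ 2
      = ∑ i : Fin n, ∑ j ∈ Finset.Ioi i, μ i * μ j := by
  have hcard : #(univ : Finset (Fin n)) = n := card_fin n
  have hθ : ∀ k, (∏ j ∈ univ.erase k, μ k / (μ k - μ j)) * μ k ^ 2
      = μ k ^ (n + 1) / ∏ j ∈ univ.erase k, (μ k - μ j) := fun k => by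
    rw [prod_div_distrib, prod_const, card_erase_of_mem (mem_univ k), hcard, div_mul_eq_mul_div,
      ← pow_add, show n - 1 + 2 = n + 1 by omega]
  have hpairs : ∑ t ∈ (univ : Finset (Fin n)).powersetCard 2, ∏ i ∈ t, μ i
      = ∑ i, ∑ j ∈ Ioi i, μ i * μ j := by
    rw [sum_powersetCard_two_univ]
    exact sum_congr rfl fun i _ => sum_congr rfl fun j hj => prod_pair (mem_Ioi.mp hj).ne
  have h := Lagrange.sum_pow_card_add_one_div_prod_sub hinj.injOn (hcard.symm ▸ hn)
  rw [hcard, hpairs, sq_sum_univ_eq_sum_sq_add_two_mul_sum_sum_Ioi] at h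
  simp only [hθ, h]
  ring

theorem stmt_16 (n : ℕ) (hn : 2 ≤ n) (μ : Fin n → ℝ)
    (hμ0 : ∀ k, μ k ≠ 0) (hinj : Function.Injective μ) :
    ∑ k : Fin n, (∏ j ∈ Finset.univ.erase k, μ k / (μ k - μ j)) * μ k ^ 2
        - ∑ k : Fin n, μ k ^ 2
      = ∑ i : Fin n, ∑ j ∈ Finset.Ioi i, μ i * μ j :=
  stmt_16_general n hn μ hinj
end
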